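/- arXiv:2501.07738 — 3 statements merged into one kernel-verified Lean document; each statement's English description precedes it below -/
import Mathlib

section
/- Consider the noisy SIS model on a finite graph G_n = (V_n, E_n) with |V_n| = n, parameters a, λ, κ > 0 with a + λ·Δ_max < 1, in the strong external infection regime 0 < κ < 1/(4(n-1)) and a > 1 - κ > 1/2. Let σ_0, η_0 ∈ {0,1}^{V_n} be two configurations with Hamming distance ρ(σ_0, η_0) = 1, differing at a single vertex x with σ_0 ≤ η_0 pointwise. Then there exists a coupling of the two chains started from σ_0 and η_0 such that after one step of the dynamics, E[ρ(σ(1), η(1))] ≤ 1 - γ/n < 1, where γ := (1-κ)a + (1-a)κ - 2(n-1)κ(1-κ) and γ > 0. -/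
open Finset Real

noncomputable section

abbrev Config (n : ℕ) := Fin n → Bool

variable {n : ℕ}

/-- Expectation of `f` under a finitely-supported distribution `μ`. -/
def expect {S : Type*} [Fintype S] (μ : S → ℝ) (f : S → ℝ) : ℝ := ∑ s, μ s * f s

/-- One step of evolution of a distribution under a transition kernel `K`. -/
def stepDist {S : Type*} [Fintype S] (K : S → S → ℝ) (μ : S → ℝ) : S → ℝ :=
  fun s' => ∑ s, μ s * K s s'

/-- `t` steps of evolution of a distribution under a transition kernel `K`. -/
def iterDist {S : Type*} [Fintype S] (K : S → S → ℝ) (μ : S → ℝ) : ℕ → S → ℝ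
  | 0 => μ
  | t + 1 => stepDist K (iterDist K μ t)

/-- The point mass at `s0`. -/
def deltaDist {S : Type*} [DecidableEq S] (s0 : S) : S → ℝ := fun s => if s = s0 then 1 else 0

/-- Hamming distance between two configurations. -/
def hamming (σ η : Config n) : ℕ := (univ.filter fun x => σ x ≠ η x).card

/-- Probability that the chosen vertex `x` changes its state: an infected vertex recovers
with probability `kap`, a susceptible vertex gets infected with probability
`a + lam * (number of infected neighbours)`. -/
def flipProb (ninf : Config n → Fin n → ℕ) (a lam kap : ℝ) (σ : Config n) (x : Fin n) : ℝ :=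
  if σ x then kap else a + lam * ninf σ x

/-- The configuration obtained from `σ` by flipping the state of vertex `x`. -/
def flipAt (σ : Config n) (x : Fin n) : Config n := Function.update σ x (!σ x)

/-- Conditional one-step law of the noisy SIS chain given that vertex `x` was chosen. -/
def localKernel (ninf : Config n → Fin n → ℕ) (a lam kap : ℝ) (σ : Config n) (x : Fin n)
    (σ' : Config n) : ℝ :=
  (if σ' = flipAt σ x then flipProb ninf a lam kap σ x else 0)
    + (if σ' = σ then 1 - flipProb ninf a lam kap σ x else 0)

/-- The transition kernel of the noisy SIS chain: a vertex is chosen uniformly at random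
and updated according to the SIS rules. -/
def sisKernel (ninf : Config n → Fin n → ℕ) (a lam kap : ℝ) : Config n → Config n → ℝ :=
  fun σ σ' => (1 / n) * ∑ x : Fin n, localKernel ninf a lam kap σ x σ'

/-- The coupling of two noisy SIS chains used in the paper: the same uniformly chosen vertex
is updated in both chains, independently. -/
def sisCoupling (ninf : Config n → Fin n → ℕ) (a lam kap : ℝ) :
    Config n × Config n → Config n × Config n → ℝ :=
  fun p q =>
    (1 / n) * ∑ x : Fin n,
      localKernel ninf a lam kap p.1 x q.1 * localKernel ninf a lam kap p.2 x q.2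

/-- Number of infected neighbours of `x` in the graph `G` for the configuration `σ`. -/
def nInfGraph (G : SimpleGraph (Fin n)) [DecidableRel G.Adj] : Config n → Fin n → ℕ :=
  fun σ x => ((G.neighborFinset x).filter fun y => σ y = true).card

/-- Total variation distance between two distributions on a finite state space. -/
def dTV {S : Type*} [Fintype S] (μ ν : S → ℝ) : ℝ := (1 / 2) * ∑ s, |μ s - ν s|

/-- The law at time `t` of the noisy SIS chain started from `η0`. -/
def sisLaw (ninf : Config n → Fin n → ℕ) (a lam kap : ℝ) (η0 : Config n) (t : ℕ) :
    Config n → ℝ :=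
  iterDist (sisKernel ninf a lam kap) (deltaDist η0) t

/-- `pim` is a stationary distribution for the kernel `K`. -/
def IsStationaryDist {S : Type*} [Fintype S] (K : S → S → ℝ) (pim : S → ℝ) : Prop :=
  (∀ s, 0 ≤ pim s) ∧ (∑ s, pim s) = 1 ∧ ∀ s', (∑ s, pim s * K s s') = pim s'

/-- Worst-case total variation distance to the stationary distribution `pim` at time `t`. -/
def worstDist (ninf : Config n → Fin n → ℕ) (a lam kap : ℝ) (pim : Config n → ℝ) (t : ℕ) : ℝ :=
  ⨆ η0 : Config n, dTV (sisLaw ninf a lam kap η0 t) pim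

/-- The `ε`-mixing time of the noisy SIS chain. -/
def mixingTime (ninf : Config n → Fin n → ℕ) (a lam kap : ℝ) (pim : Config n → ℝ) (ε : ℝ) : ℕ :=
  sInf {t : ℕ | worstDist ninf a lam kap pim t ≤ ε}

/-- The contraction constant `γ` of the paper. -/
def gammaSIS (n : ℕ) (a kap : ℝ) : ℝ :=
  (1 - kap) * a + (1 - a) * kap - 2 * ((n : ℝ) - 1) * kap * (1 - kap)

/-- The constant `β` of the paper. -/
def betaSIS (pstar kap : ℝ) : ℝ := kap + pstar * (1 - 2 * kap)

/-- `c` is a coupling of the distributions `μ` and `ν`. -/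
def IsCouplingDist {S : Type*} [Fintype S] (c : S × S → ℝ) (μ ν : S → ℝ) : Prop :=
  (∀ q, 0 ≤ c q) ∧ (∀ s, (∑ e, c (s, e)) = μ s) ∧ (∀ e, (∑ s, c (s, e)) = ν e)

/-- `Kc` is a (Markovian) coupling kernel for the transition kernel `K`: both marginals of
every row of `Kc` evolve according to `K`. -/
def IsCouplingKernel {S : Type*} [Fintype S] (Kc : S × S → S × S → ℝ) (K : S → S → ℝ) : Prop :=
  (∀ p q, 0 ≤ Kc p q) ∧ (∀ p s', (∑ e', Kc p (s', e')) = K p.1 s')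
    ∧ (∀ p e', (∑ s', Kc p (s', e')) = K p.2 e')

end


section AuxLemmas
open Finset

variable {n : ℕ}

lemma flipAt_apply_self (σ : Config n) (z : Fin n) : flipAt σ z z = !σ z := by
  simp [flipAt]

lemma sum_localKernel_mul (ninf : Config n → Fin n → ℕ) (a lam kap : ℝ)
    (σ : Config n) (z : Fin n) (g : Config n → ℝ) :
    ∑ s : Config n, localKernel ninf a lam kap σ z s * g s
      = flipProb ninf a lam kap σ z * g (flipAt σ z)
        + (1 - flipProb ninf a lam kap σ z) * g σ := by
  simp only [localKernel, add_mul, Finset.sum_add_distrib, ite_mul, zero_mul,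
    Finset.sum_ite_eq', Finset.mem_univ, if_true]

lemma sum_localKernel (ninf : Config n → Fin n → ℕ) (a lam kap : ℝ)
    (σ : Config n) (z : Fin n) :
    ∑ s : Config n, localKernel ninf a lam kap σ z s = 1 := by
  have h := sum_localKernel_mul ninf a lam kap σ z (fun _ => 1)
  simp only [mul_one] at h
  calc ∑ s : Config n, localKernel ninf a lam kap σ z s
      = ∑ s : Config n, localKernel ninf a lam kap σ z s * 1 := by simp
    _ = 1 := by rw [sum_localKernel_mul]; ring

lemma localKernel_nonneg (ninf : Config n → Fin n → ℕ) (a lam kap : ℝ)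
    (σ : Config n) (z : Fin n) (σ' : Config n)
    (h0 : 0 ≤ flipProb ninf a lam kap σ z) (h1 : flipProb ninf a lam kap σ z ≤ 1) :
    0 ≤ localKernel ninf a lam kap σ z σ' := by
  unfold localKernel
  split_ifs <;> simp <;> linarith

lemma flipProb_bounds (G : SimpleGraph (Fin n)) [DecidableRel G.Adj]
    (a lam kap : ℝ) (ha : 0 < a) (hlam : 0 < lam) (hkap : 0 < kap) (hkap1 : kap ≤ 1)
    (hpstar : a + lam * (G.maxDegree : ℝ) < 1) (σ : Config n) (z : Fin n) :
    0 ≤ flipProb (nInfGraph G) a lam kap σ z ∧ flipProb (nInfGraph G) a lam kap σ z ≤ 1 := by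
  unfold flipProb
  split
  · exact ⟨hkap.le, hkap1⟩
  · refine ⟨by positivity, ?_⟩
    have hc : nInfGraph G σ z ≤ G.maxDegree := by
      refine le_trans (le_trans (Finset.card_filter_le _ _) ?_) (G.degree_le_maxDegree z)
      rw [SimpleGraph.card_neighborFinset_eq_degree]
    have hc' : (nInfGraph G σ z : ℝ) ≤ (G.maxDegree : ℝ) := by exact_mod_cast hc
    nlinarith

lemma nInf_le_max (G : SimpleGraph (Fin n)) [DecidableRel G.Adj] (σ : Config n) (z : Fin n) :
    (nInfGraph G σ z : ℝ) ≤ (G.maxDegree : ℝ) := by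
  have hc : nInfGraph G σ z ≤ G.maxDegree := by
    refine le_trans (le_trans (Finset.card_filter_le _ _) ?_) (G.degree_le_maxDegree z)
    rw [SimpleGraph.card_neighborFinset_eq_degree]
  exact_mod_cast hc

lemma hamming_self (σ : Config n) : hamming σ σ = 0 := by simp [hamming]

lemma hamming_flip_flip (σ η : Config n) (z : Fin n) :
    hamming (flipAt σ z) (flipAt η z) = hamming σ η := by
  unfold hamming
  congr 1
  ext y
  simp only [mem_filter, mem_univ, true_and, flipAt, Function.update_apply]
  by_cases h : y = z
  · subst h
    simp only [if_pos rfl]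
    cases σ y <;> cases η y <;> simp
  · simp [h]

lemma hamming_flip_left_ne (σ η : Config n) (x z : Fin n) (hzx : z ≠ x)
    (hx : σ x ≠ η x) (hagree : ∀ y, y ≠ x → σ y = η y) :
    hamming (flipAt σ z) η = 2 := by
  unfold hamming
  have hset : (univ.filter fun y => flipAt σ z y ≠ η y) = {z, x} := by
    ext y
    simp only [mem_filter, mem_univ, true_and, flipAt, Function.update_apply,
      mem_insert, mem_singleton]
    by_cases h1 : y = z
    · subst h1
      have hyz : σ y = η y := hagree y hzx
      simp only [if_pos rfl, hyz, true_or, iff_true]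
      cases η y <;> simp
    · simp only [if_neg h1]
      by_cases h2 : y = x
      · subst h2
        simp [hx, h1]
      · simp [h1, h2, hagree y h2]
  rw [hset, Finset.card_insert_of_notMem (by simp [hzx]), Finset.card_singleton]

end AuxLemmas

set_option maxHeartbeats 2000000

/-- Contraction property for the strong external infection regime,
Lemma `contraction property` of the paper. -/
theorem noisySIS_one_step_contraction_of_hamming_one
    (n : ℕ) (hn : 2 ≤ n) (G : SimpleGraph (Fin n)) [DecidableRel G.Adj]
    (a lam kap : ℝ) (ha : 0 < a) (hlam : 0 < lam) (hkap : 0 < kap)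
    (hpstar : a + lam * (G.maxDegree : ℝ) < 1)
    (hkap' : kap < 1 / (4 * ((n : ℝ) - 1)))
    (hreg1 : 1 - kap < a) (hreg2 : 1 / 2 < 1 - kap)
    (σ0 η0 : Config n) (x : Fin n)
    (hx : σ0 x = false ∧ η0 x = true)
    (hle : ∀ y, σ0 y = true → η0 y = true)
    (hham : hamming σ0 η0 = 1) :
    0 < gammaSIS n a kap ∧
      ∃ c : Config n × Config n → ℝ,
        IsCouplingDist c (sisKernel (nInfGraph G) a lam kap σ0)
            (sisKernel (nInfGraph G) a lam kap η0) ∧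
          expect c (fun q => (hamming q.1 q.2 : ℝ)) ≤ 1 - gammaSIS n a kap / n ∧
          1 - gammaSIS n a kap / n < 1 := by
  classical
  obtain ⟨hσx, hηx⟩ := hx
  have hn2 : (2:ℝ) ≤ (n:ℝ) := by exact_mod_cast hn
  have hn1 : (1:ℝ) ≤ (n:ℝ) - 1 := by linarith
  have hnpos : (0:ℝ) < (n:ℝ) := by linarith
  have hκhalf : kap < 1/2 := by linarith
  have h4 : kap * (4 * ((n:ℝ) - 1)) < 1 := by
    rw [lt_div_iff₀ (by linarith : (0:ℝ) < 4 * ((n:ℝ)-1))] at hkap'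
    exact hkap'
  -- agreement off x
  have hmemx : x ∈ univ.filter fun y => σ0 y ≠ η0 y := by simp [hσx, hηx]
  obtain ⟨b, hb⟩ := Finset.card_eq_one.mp hham
  have hbx : b = x := by
    rw [hb, Finset.mem_singleton] at hmemx; exact hmemx.symm
  have hagree : ∀ y, y ≠ x → σ0 y = η0 y := by
    intro y hy
    by_contra h
    have hmem : y ∈ univ.filter fun w => σ0 w ≠ η0 w := by simp [h]
    rw [hb, Finset.mem_singleton] at hmem
    exact hy (hmem.trans hbx)
  have hγ : 0 < gammaSIS n a kap := by
    unfold gammaSIS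
    nlinarith [mul_pos (sub_pos.mpr hreg1) (show (0:ℝ) < 1 - 2*kap by linarith),
      sq_nonneg (1 - 2*kap),
      mul_nonneg (mul_nonneg (by linarith : (0:ℝ) ≤ (n:ℝ)-1) hkap.le) hkap.le, h4]
  have hpb : ∀ (σ : Config n) (z : Fin n),
      0 ≤ flipProb (nInfGraph G) a lam kap σ z ∧ flipProb (nInfGraph G) a lam kap σ z ≤ 1 :=
    fun σ z => flipProb_bounds G a lam kap ha hlam hkap (by linarith) hpstar σ z
  have hxflip : flipAt σ0 x = η0 := by
    funext y
    by_cases h : y = x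
    · subst h; simp [flipAt, hσx, hηx]
    · simp [flipAt, Function.update_apply, h, hagree y h]
  have hxflip' : flipAt η0 x = σ0 := by
    funext y
    by_cases h : y = x
    · subst h; simp [flipAt, hσx, hηx]
    · simp [flipAt, Function.update_apply, h, (hagree y h).symm]
  have hne : σ0 x ≠ η0 x := by simp [hσx, hηx]
  refine ⟨hγ, sisCoupling (nInfGraph G) a lam kap (σ0, η0), ⟨?_, ?_, ?_⟩, ?_, ?_⟩
  · -- nonnegativity
    intro q
    unfold sisCoupling
    apply mul_nonneg (by positivity)
    apply Finset.sum_nonneg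
    intro z _
    exact mul_nonneg
      (localKernel_nonneg _ _ _ _ _ _ _ (hpb σ0 z).1 (hpb σ0 z).2)
      (localKernel_nonneg _ _ _ _ _ _ _ (hpb η0 z).1 (hpb η0 z).2)
  · -- first marginal
    intro s
    simp only [sisCoupling, sisKernel]
    rw [← Finset.mul_sum, Finset.sum_comm]
    congr 1
    refine Finset.sum_congr rfl fun z _ => ?_
    rw [← Finset.mul_sum, sum_localKernel, mul_one]
  · -- second marginal
    intro e
    simp only [sisCoupling, sisKernel]
    rw [← Finset.mul_sum, Finset.sum_comm]
    congr 1
    refine Finset.sum_congr rfl fun z _ => ?_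
    rw [← Finset.sum_mul, sum_localKernel, one_mul]
  · -- expectation bound
    obtain ⟨V, hV⟩ : ∃ V : Fin n → ℝ, V = fun z =>
        flipProb (nInfGraph G) a lam kap σ0 z *
          (flipProb (nInfGraph G) a lam kap η0 z * (hamming (flipAt σ0 z) (flipAt η0 z) : ℝ)
            + (1 - flipProb (nInfGraph G) a lam kap η0 z) * (hamming (flipAt σ0 z) η0 : ℝ))
          + (1 - flipProb (nInfGraph G) a lam kap σ0 z) *
            (flipProb (nInfGraph G) a lam kap η0 z * (hamming σ0 (flipAt η0 z) : ℝ)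
              + (1 - flipProb (nInfGraph G) a lam kap η0 z) * (hamming σ0 η0 : ℝ)) :=
      ⟨_, rfl⟩
    have hexp : _root_.expect (sisCoupling (nInfGraph G) a lam kap (σ0, η0))
        (fun q => (hamming q.1 q.2 : ℝ)) = (1/(n:ℝ)) * ∑ z : Fin n, V z := by
      unfold _root_.expect sisCoupling
      simp only [mul_assoc, Finset.sum_mul]
      rw [← Finset.mul_sum, Finset.sum_comm]
      congr 1
      refine Finset.sum_congr rfl fun z _ => ?_
      rw [Fintype.sum_prod_type]
      calc ∑ s : Config n, ∑ e : Config n,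
            localKernel (nInfGraph G) a lam kap σ0 z s *
              (localKernel (nInfGraph G) a lam kap η0 z e * ((hamming s e : ℝ)))
          = ∑ s : Config n, localKernel (nInfGraph G) a lam kap σ0 z s *
              ∑ e : Config n, localKernel (nInfGraph G) a lam kap η0 z e * (hamming s e : ℝ) := by
            exact Finset.sum_congr rfl fun s _ => (Finset.mul_sum _ _ _).symm
        _ = ∑ s : Config n, localKernel (nInfGraph G) a lam kap σ0 z s *
              (flipProb (nInfGraph G) a lam kap η0 z * (hamming s (flipAt η0 z) : ℝ)
                + (1 - flipProb (nInfGraph G) a lam kap η0 z) * (hamming s η0 : ℝ)) := by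
            refine Finset.sum_congr rfl fun s _ => ?_
            rw [sum_localKernel_mul (nInfGraph G) a lam kap η0 z (fun e => (hamming s e : ℝ))]
        _ = V z := by
            rw [sum_localKernel_mul (nInfGraph G) a lam kap σ0 z
              (fun s => flipProb (nInfGraph G) a lam kap η0 z * (hamming s (flipAt η0 z) : ℝ)
                + (1 - flipProb (nInfGraph G) a lam kap η0 z) * (hamming s η0 : ℝ)), hV]
    have hVx : V x ≤ 1 - kap - a * (1 - 2*kap) := by
      have hp2x : flipProb (nInfGraph G) a lam kap η0 x = kap := by simp [flipProb, hηx]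
      have hp1x : a ≤ flipProb (nInfGraph G) a lam kap σ0 x := by
        have hq : flipProb (nInfGraph G) a lam kap σ0 x
            = a + lam * ((nInfGraph G σ0 x : ℕ) : ℝ) := by simp [flipProb, hσx]
        rw [hq]
        have h0 : (0:ℝ) ≤ lam * ((nInfGraph G σ0 x : ℕ) : ℝ) := by positivity
        linarith
      have e1 : hamming (flipAt σ0 x) (flipAt η0 x) = 1 := by rw [hamming_flip_flip]; exact hham
      have e2 : hamming (flipAt σ0 x) η0 = 0 := by rw [hxflip, hamming_self]
      have e3 : hamming σ0 (flipAt η0 x) = 0 := by rw [hxflip', hamming_self]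
      rw [hV]
      simp only [e1, e2, e3, hham, hp2x, Nat.cast_one, Nat.cast_zero]
      obtain ⟨q, hq⟩ : ∃ q : ℝ, flipProb (nInfGraph G) a lam kap σ0 x = q := ⟨_, rfl⟩
      rw [hq] at hp1x ⊢
      have h12 : (0:ℝ) ≤ 1 - 2*kap := by linarith
      nlinarith [mul_le_mul_of_nonneg_right hp1x h12]
    have hVz : ∀ z ∈ univ.erase x, V z ≤ 1 + 2 * kap * (1 - kap) := by
      intro z hz
      have hzx : z ≠ x := Finset.ne_of_mem_erase hz
      have e1 : hamming (flipAt σ0 z) (flipAt η0 z) = 1 := by rw [hamming_flip_flip]; exact hham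
      have e2 : hamming (flipAt σ0 z) η0 = 2 := hamming_flip_left_ne σ0 η0 x z hzx hne hagree
      have e3 : hamming σ0 (flipAt η0 z) = 2 := by
        have h2' : hamming (flipAt η0 z) σ0 = 2 := by
          refine hamming_flip_left_ne η0 σ0 x z hzx (by simp [hσx, hηx]) ?_
          exact fun y hy => (hagree y hy).symm
        rw [← h2']
        unfold hamming
        congr 1
        ext y
        simp only [mem_filter, mem_univ, true_and]
        exact ne_comm
      rw [hV]
      simp only [e1, e2, e3, hham, Nat.cast_one, Nat.cast_two, Nat.cast_ofNat]
      have hzagree : σ0 z = η0 z := hagree z hzx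
      obtain ⟨q1, hq1⟩ : ∃ q : ℝ, flipProb (nInfGraph G) a lam kap σ0 z = q := ⟨_, rfl⟩
      obtain ⟨q2, hq2⟩ : ∃ q : ℝ, flipProb (nInfGraph G) a lam kap η0 z = q := ⟨_, rfl⟩
      rw [hq1, hq2]
      by_cases hcz : σ0 z = true
      · have hp1z : q1 = kap := by rw [← hq1]; simp [flipProb, hcz]
        have hp2z : q2 = kap := by rw [← hq2]; simp [flipProb, ← hzagree, hcz]
        rw [hp1z, hp2z]; nlinarith
      · have hcz' : σ0 z = false := by cases h : σ0 z <;> simp_all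
        have hcz2 : η0 z = false := by rw [← hzagree]; exact hcz'
        have hb1 : a ≤ q1 ∧ q1 < 1 := by
          have hq : q1 = a + lam * ((nInfGraph G σ0 z : ℕ) : ℝ) := by
            rw [← hq1]; simp [flipProb, hcz']
          rw [hq]
          have h0 : (0:ℝ) ≤ lam * ((nInfGraph G σ0 z : ℕ) : ℝ) := by positivity
          have hm := mul_le_mul_of_nonneg_left (nInf_le_max G σ0 z) hlam.le
          constructor
          · linarith
          · linarith
        have hb2 : a ≤ q2 ∧ q2 < 1 := by
          have hq : q2 = a + lam * ((nInfGraph G η0 z : ℕ) : ℝ) := by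
            rw [← hq2]; simp [flipProb, hcz2]
          rw [hq]
          have h0 : (0:ℝ) ≤ lam * ((nInfGraph G η0 z : ℕ) : ℝ) := by positivity
          have hm := mul_le_mul_of_nonneg_left (nInf_le_max G η0 z) hlam.le
          constructor
          · linarith
          · linarith
        have h1 : 1 - kap < q1 := lt_of_lt_of_le hreg1 hb1.1
        have h2 : 1 - kap < q2 := lt_of_lt_of_le hreg1 hb2.1
        nlinarith [mul_nonneg (show (0:ℝ) ≤ q1 - (1 - kap) by linarith)
            (show (0:ℝ) ≤ 2 * q2 - 1 by linarith),
          mul_nonneg (show (0:ℝ) ≤ q2 - (1 - kap) by linarith)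
            (show (0:ℝ) ≤ 1 - 2*kap by linarith)]
    have hsum : ∑ z : Fin n, V z ≤ (n:ℝ) - gammaSIS n a kap := by
      rw [← Finset.add_sum_erase _ V (Finset.mem_univ x)]
      have hcard : (univ.erase x).card = n - 1 := by
        rw [Finset.card_erase_of_mem (Finset.mem_univ x), Finset.card_univ, Fintype.card_fin]
      have h2 : ∑ z ∈ univ.erase x, V z ≤ ((n:ℝ) - 1) * (1 + 2 * kap * (1 - kap)) := by
        have hs := Finset.sum_le_card_nsmul (univ.erase x) V (1 + 2 * kap * (1 - kap)) hVz
        rw [hcard, nsmul_eq_mul] at hs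
        have hcast : ((n - 1 : ℕ) : ℝ) = (n:ℝ) - 1 := by
          have h1n : 1 ≤ n := by omega
          push_cast [Nat.cast_sub h1n]
          ring
        rw [hcast] at hs
        exact hs
      unfold gammaSIS
      nlinarith [hVx, h2]
    rw [hexp]
    have hfin : (1/(n:ℝ)) * ((n:ℝ) - gammaSIS n a kap) = 1 - gammaSIS n a kap / (n:ℝ) := by
      field_simp
    rw [← hfin]
    exact mul_le_mul_of_nonneg_left hsum (by positivity)
  · have hpos : 0 < gammaSIS n a kap / (n:ℝ) := div_pos hγ hnpos
    linarith
end

section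
/- Consider the noisy SIS model on a finite graph G_n with |V_n| = n, parameters a, λ, κ > 0 with a + λ·Δ_max < 1, in the strong external infection regime 0 < κ < 1/(4(n-1)) and a > 1 - κ > 1/2, and let γ := (1-κ)a + (1-a)κ - 2(n-1)κ(1-κ). For any two initial configurations σ_0, η_0 ∈ {0,1}^{V_n} (with arbitrary Hamming distance ℓ = ρ(σ_0, η_0) ≥ 0), there exists a coupling of the two chains started from σ_0 and η_0 such that after one step, E[ρ(σ(1), η(1))] ≤ ρ(σ_0, η_0)·(1 - γ/n). -/
open Finset Real

noncomputable section SISAux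

open Finset

namespace SISAux

variable {n : ℕ}

lemma flipAt_apply_self (σ : Config n) (x : Fin n) : flipAt σ x x = !σ x := by
  unfold flipAt
  exact Function.update_self x (!σ x) σ

lemma flipAt_apply_ne (σ : Config n) {x y : Fin n} (h : y ≠ x) : flipAt σ x y = σ y := by
  unfold flipAt
  exact Function.update_of_ne h (!σ x) σ

lemma flipAt_ne (σ : Config n) (x : Fin n) : flipAt σ x ≠ σ := by
  intro h
  have h2 := congrFun h x
  rw [flipAt_apply_self] at h2
  exact (Bool.not_ne_self (σ x)) h2

lemma hamming_real (σ η : Config n) :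
    (hamming σ η : ℝ) = ∑ y, (if σ y ≠ η y then (1:ℝ) else 0) := by
  rw [hamming, card_filter]
  push_cast
  rfl

lemma hamming_erase (σ η : Config n) (x : Fin n) :
    (hamming σ η : ℝ) = (∑ y ∈ univ.erase x, (if σ y ≠ η y then (1:ℝ) else 0))
      + (if σ x ≠ η x then (1:ℝ) else 0) := by
  rw [hamming_real, ← Finset.sum_erase_add _ _ (mem_univ x)]

lemma ham_flip_left (σ η : Config n) (x : Fin n) :
    (hamming (flipAt σ x) η : ℝ)
      = (∑ y ∈ univ.erase x, (if σ y ≠ η y then (1:ℝ) else 0))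
        + (if σ x = η x then (1:ℝ) else 0) := by
  rw [hamming_erase _ _ x]
  congr 1
  · exact sum_congr rfl fun y hy => by rw [flipAt_apply_ne σ (mem_erase.mp hy).1]
  · rw [flipAt_apply_self]
    cases hσ : σ x <;> cases hη : η x <;> simp

lemma ham_flip_right (σ η : Config n) (x : Fin n) :
    (hamming σ (flipAt η x) : ℝ)
      = (∑ y ∈ univ.erase x, (if σ y ≠ η y then (1:ℝ) else 0))
        + (if σ x = η x then (1:ℝ) else 0) := by
  rw [hamming_erase _ _ x]
  congr 1
  · exact sum_congr rfl fun y hy => by rw [flipAt_apply_ne η (mem_erase.mp hy).1]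
  · rw [flipAt_apply_self]
    cases hσ : σ x <;> cases hη : η x <;> simp

lemma ham_flip_both (σ η : Config n) (x : Fin n) :
    (hamming (flipAt σ x) (flipAt η x) : ℝ)
      = (∑ y ∈ univ.erase x, (if σ y ≠ η y then (1:ℝ) else 0))
        + (if σ x ≠ η x then (1:ℝ) else 0) := by
  rw [hamming_erase _ _ x]
  congr 1
  · exact sum_congr rfl fun y hy => by
      rw [flipAt_apply_ne σ (mem_erase.mp hy).1, flipAt_apply_ne η (mem_erase.mp hy).1]
  · rw [flipAt_apply_self, flipAt_apply_self]
    cases hσ : σ x <;> cases hη : η x <;> simp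

/-- The per-vertex coupling used in the proof. -/
def locCpl (ninf : Config n → Fin n → ℕ) (a lam kap : ℝ) (σ0 η0 : Config n) (x : Fin n) :
    Config n × Config n → ℝ :=
  fun q =>
    if σ0 x = η0 x then
      (min (flipProb ninf a lam kap σ0 x) (flipProb ninf a lam kap η0 x))
          * (if q = (flipAt σ0 x, flipAt η0 x) then 1 else 0)
        + (1 - max (flipProb ninf a lam kap σ0 x) (flipProb ninf a lam kap η0 x))
          * (if q = (σ0, η0) then 1 else 0)
        + (flipProb ninf a lam kap σ0 x
            - min (flipProb ninf a lam kap σ0 x) (flipProb ninf a lam kap η0 x))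
          * (if q = (flipAt σ0 x, η0) then 1 else 0)
        + (flipProb ninf a lam kap η0 x
            - min (flipProb ninf a lam kap σ0 x) (flipProb ninf a lam kap η0 x))
          * (if q = (σ0, flipAt η0 x) then 1 else 0)
    else
      (1 - flipProb ninf a lam kap σ0 x) * (if q = (σ0, flipAt η0 x) then 1 else 0)
        + (1 - flipProb ninf a lam kap η0 x) * (if q = (flipAt σ0 x, η0) then 1 else 0)
        + (flipProb ninf a lam kap σ0 x + flipProb ninf a lam kap η0 x - 1)
          * (if q = (flipAt σ0 x, flipAt η0 x) then 1 else 0)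

lemma ite_nonneg' (P : Prop) [Decidable P] : (0:ℝ) ≤ if P then 1 else 0 := by
  split <;> norm_num

lemma locCpl_nonneg (ninf : Config n → Fin n → ℕ) (a lam kap : ℝ) (σ0 η0 : Config n)
    (x : Fin n)
    (h1 : 0 ≤ flipProb ninf a lam kap σ0 x) (h1' : flipProb ninf a lam kap σ0 x ≤ 1)
    (h2 : 0 ≤ flipProb ninf a lam kap η0 x) (h2' : flipProb ninf a lam kap η0 x ≤ 1)
    (hs : σ0 x ≠ η0 x → 1 ≤ flipProb ninf a lam kap σ0 x + flipProb ninf a lam kap η0 x)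
    (q : Config n × Config n) : 0 ≤ locCpl ninf a lam kap σ0 η0 x q := by
  have key : ∀ (c : ℝ) (P : Prop) (_ : Decidable P), 0 ≤ c → 0 ≤ c * (if P then (1:ℝ) else 0) :=
    fun c P _ hc => mul_nonneg hc (ite_nonneg' P)
  unfold locCpl
  by_cases hx : σ0 x = η0 x
  · rw [if_pos hx]
    have h3 := min_le_left (flipProb ninf a lam kap σ0 x) (flipProb ninf a lam kap η0 x)
    have h4 := min_le_right (flipProb ninf a lam kap σ0 x) (flipProb ninf a lam kap η0 x)
    have h5 := max_le h1' h2'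
    have h6 := le_min h1 h2
    refine add_nonneg (add_nonneg (add_nonneg ?_ ?_) ?_) ?_ <;>
      exact key _ _ _ (by linarith)
  · rw [if_neg hx]
    have h3 := hs hx
    refine add_nonneg (add_nonneg ?_ ?_) ?_ <;>
      exact key _ _ _ (by linarith)

lemma sum_pair_right (A B s : Config n) :
    ∑ e : Config n, (if (s, e) = (A, B) then (1:ℝ) else 0) = if s = A then 1 else 0 := by
  by_cases hs : s = A
  · subst hs
    simp [Prod.ext_iff]
  · simp [Prod.ext_iff, hs]

lemma sum_pair_left (A B e : Config n) :
    ∑ s : Config n, (if (s, e) = (A, B) then (1:ℝ) else 0) = if e = B then 1 else 0 := by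
  by_cases he : e = B
  · subst he
    simp [Prod.ext_iff]
  · simp [Prod.ext_iff, he]

lemma locCpl_margL (ninf : Config n → Fin n → ℕ) (a lam kap : ℝ) (σ0 η0 : Config n)
    (x : Fin n) (s : Config n) :
    ∑ e, locCpl ninf a lam kap σ0 η0 x (s, e) = localKernel ninf a lam kap σ0 x s := by
  set p1 := flipProb ninf a lam kap σ0 x with hp1
  set p2 := flipProb ninf a lam kap η0 x with hp2
  have hmm : min p1 p2 + max p1 p2 = p1 + p2 := min_add_max p1 p2
  have hne := flipAt_ne σ0 x
  rcases eq_or_ne (σ0 x) (η0 x) with hx | hx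
  · simp only [locCpl, if_pos hx, sum_add_distrib, ← mul_sum, sum_pair_right, localKernel,
      ← hp1, ← hp2]
    by_cases h1 : s = flipAt σ0 x
    · have h2 : ¬ s = σ0 := by rw [h1]; exact hne
      simp only [if_pos h1, if_neg h2, mul_one, mul_zero, add_zero, zero_add]
      try linarith
    · by_cases h2 : s = σ0
      · simp only [if_pos h2, if_neg h1, mul_one, mul_zero, add_zero, zero_add]
        try linarith
      · simp only [if_neg h1, if_neg h2, mul_zero, add_zero]
  · simp only [locCpl, if_neg hx, sum_add_distrib, ← mul_sum, sum_pair_right, localKernel,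
      ← hp1, ← hp2]
    by_cases h1 : s = flipAt σ0 x
    · have h2 : ¬ s = σ0 := by rw [h1]; exact hne
      simp only [if_pos h1, if_neg h2, mul_one, mul_zero, add_zero, zero_add]
      try linarith
    · by_cases h2 : s = σ0
      · simp only [if_pos h2, if_neg h1, mul_one, mul_zero, add_zero, zero_add]
        try linarith
      · simp only [if_neg h1, if_neg h2, mul_zero, add_zero, zero_add]

lemma locCpl_margR (ninf : Config n → Fin n → ℕ) (a lam kap : ℝ) (σ0 η0 : Config n)
    (x : Fin n) (e : Config n) :
    ∑ s, locCpl ninf a lam kap σ0 η0 x (s, e) = localKernel ninf a lam kap η0 x e := by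
  set p1 := flipProb ninf a lam kap σ0 x with hp1
  set p2 := flipProb ninf a lam kap η0 x with hp2
  have hmm : min p1 p2 + max p1 p2 = p1 + p2 := min_add_max p1 p2
  have hne := flipAt_ne η0 x
  rcases eq_or_ne (σ0 x) (η0 x) with hx | hx
  · simp only [locCpl, if_pos hx, sum_add_distrib, ← mul_sum, sum_pair_left, localKernel,
      ← hp1, ← hp2]
    by_cases h1 : e = flipAt η0 x
    · have h2 : ¬ e = η0 := by rw [h1]; exact hne
      simp only [if_pos h1, if_neg h2, mul_one, mul_zero, add_zero, zero_add]
      try linarith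
    · by_cases h2 : e = η0
      · simp only [if_pos h2, if_neg h1, mul_one, mul_zero, add_zero, zero_add]
        try linarith
      · simp only [if_neg h1, if_neg h2, mul_zero, add_zero]
  · simp only [locCpl, if_neg hx, sum_add_distrib, ← mul_sum, sum_pair_left, localKernel,
      ← hp1, ← hp2]
    by_cases h1 : e = flipAt η0 x
    · have h2 : ¬ e = η0 := by rw [h1]; exact hne
      simp only [if_pos h1, if_neg h2, mul_one, mul_zero, add_zero, zero_add]
      try linarith
    · by_cases h2 : e = η0
      · simp only [if_pos h2, if_neg h1, mul_one, mul_zero, add_zero, zero_add]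
        try linarith
      · simp only [if_neg h1, if_neg h2, mul_zero, add_zero, zero_add]

lemma sum_point (P : Config n × Config n) (f : Config n × Config n → ℝ) :
    ∑ q, (if q = P then (1:ℝ) else 0) * f q = f P := by
  rw [Finset.sum_eq_single P]
  · simp
  · intro b _ hb
    simp [hb]
  · simp

lemma locCpl_expect_agree (ninf : Config n → Fin n → ℕ) (a lam kap : ℝ) (σ0 η0 : Config n)
    (x : Fin n) (hx : σ0 x = η0 x) :
    ∑ q, locCpl ninf a lam kap σ0 η0 x q * (hamming q.1 q.2 : ℝ)
      = (hamming σ0 η0 : ℝ)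
        + (flipProb ninf a lam kap σ0 x + flipProb ninf a lam kap η0 x
            - 2 * min (flipProb ninf a lam kap σ0 x) (flipProb ninf a lam kap η0 x)) := by
  set p1 := flipProb ninf a lam kap σ0 x with hp1
  set p2 := flipProb ninf a lam kap η0 x with hp2
  have hmm : min p1 p2 + max p1 p2 = p1 + p2 := min_add_max p1 p2
  simp only [locCpl, ← hp1, ← hp2, if_pos hx, add_mul, sum_add_distrib, mul_assoc,
    ← mul_sum, sum_point]
  rw [hamming_erase σ0 η0 x, ham_flip_both σ0 η0 x, ham_flip_left σ0 η0 x,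
    ham_flip_right σ0 η0 x]
  rw [if_neg (by simp [hx]), if_pos hx]
  set D := ∑ y ∈ Finset.univ.erase x, (if σ0 y ≠ η0 y then (1:ℝ) else 0) with hD
  linear_combination (-D) * hmm

lemma locCpl_expect_disagree (ninf : Config n → Fin n → ℕ) (a lam kap : ℝ)
    (σ0 η0 : Config n) (x : Fin n) (hx : σ0 x ≠ η0 x) :
    ∑ q, locCpl ninf a lam kap σ0 η0 x q * (hamming q.1 q.2 : ℝ)
      = (hamming σ0 η0 : ℝ)
        - (2 - flipProb ninf a lam kap σ0 x - flipProb ninf a lam kap η0 x) := by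
  set p1 := flipProb ninf a lam kap σ0 x with hp1
  set p2 := flipProb ninf a lam kap η0 x with hp2
  simp only [locCpl, ← hp1, ← hp2, if_neg hx, add_mul, sum_add_distrib, mul_assoc,
    ← mul_sum, sum_point]
  rw [hamming_erase σ0 η0 x, ham_flip_both σ0 η0 x, ham_flip_left σ0 η0 x,
    ham_flip_right σ0 η0 x]
  rw [if_pos hx, if_neg hx]
  ring

end SISAux

end SISAux


/-- One-step contraction for arbitrary initial configurations. -/
theorem noisySIS_one_step_contraction
    (n : ℕ) (hn : 2 ≤ n) (G : SimpleGraph (Fin n)) [DecidableRel G.Adj]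
    (a lam kap : ℝ) (ha : 0 < a) (hlam : 0 < lam) (hkap : 0 < kap)
    (hpstar : a + lam * (G.maxDegree : ℝ) < 1)
    (hkap' : kap < 1 / (4 * ((n : ℝ) - 1)))
    (hreg1 : 1 - kap < a) (hreg2 : 1 / 2 < 1 - kap)
    (σ0 η0 : Config n) :
    ∃ c : Config n × Config n → ℝ,
      IsCouplingDist c (sisKernel (nInfGraph G) a lam kap σ0)
          (sisKernel (nInfGraph G) a lam kap η0) ∧
        expect c (fun q => (hamming q.1 q.2 : ℝ)) ≤
          (hamming σ0 η0 : ℝ) * (1 - gammaSIS n a kap / n) := by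
  classical
  open SISAux in
  have hn0 : (0:ℝ) < n := by
    have h : 0 < n := by omega
    exact_mod_cast h
  have hkhalf : kap < 1/2 := by linarith
  have hΔ0 : (0:ℝ) ≤ (G.maxDegree : ℝ) := Nat.cast_nonneg _
  have ha1 : a < 1 := by nlinarith
  have hdeg : ∀ (σ : Config n) (x : Fin n), (nInfGraph G σ x : ℝ) ≤ (G.maxDegree : ℝ) := by
    intro σ x
    have h1 : nInfGraph G σ x ≤ G.degree x := Finset.card_filter_le _ _
    have h2 : G.degree x ≤ G.maxDegree := G.degree_le_maxDegree x
    exact_mod_cast le_trans h1 h2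
  have hP0 : ∀ (σ : Config n) (x : Fin n), 0 < flipProb (nInfGraph G) a lam kap σ x := by
    intro σ x
    unfold flipProb
    split
    · exact hkap
    · have h : (0:ℝ) ≤ lam * (nInfGraph G σ x : ℝ) := by positivity
      linarith
  have hP1 : ∀ (σ : Config n) (x : Fin n), flipProb (nInfGraph G) a lam kap σ x < 1 := by
    intro σ x
    unfold flipProb
    split
    · linarith
    · have h : lam * (nInfGraph G σ x : ℝ) ≤ lam * (G.maxDegree : ℝ) :=
        mul_le_mul_of_nonneg_left (hdeg σ x) hlam.le
      linarith
  have hPa : ∀ (σ : Config n) (x : Fin n), σ x = false →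
      a ≤ flipProb (nInfGraph G) a lam kap σ x := by
    intro σ x h
    have h0 : (0:ℝ) ≤ lam * (nInfGraph G σ x : ℝ) := by positivity
    simp only [flipProb, h]
    norm_num
    linarith
  have hPk : ∀ (σ : Config n) (x : Fin n), σ x = true →
      flipProb (nInfGraph G) a lam kap σ x = kap := by
    intro σ x h
    simp [flipProb, h]
  have hPsum : ∀ x : Fin n, σ0 x ≠ η0 x →
      1 ≤ flipProb (nInfGraph G) a lam kap σ0 x + flipProb (nInfGraph G) a lam kap η0 x := by
    intro x hx
    cases h1 : σ0 x
    · have h2 : η0 x = true := by revert hx; cases h2 : η0 x <;> simp [h1, h2]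
      have ha' := hPa σ0 x h1
      rw [hPk η0 x h2]
      linarith
    · have h2 : η0 x = false := by revert hx; cases h2 : η0 x <;> simp [h1, h2]
      have ha' := hPa η0 x h2
      rw [hPk σ0 x h1]
      linarith
  refine ⟨fun q => (1/(n:ℝ)) * ∑ x : Fin n, SISAux.locCpl (nInfGraph G) a lam kap σ0 η0 x q,
    ⟨?_, ?_, ?_⟩, ?_⟩
  · intro q
    apply mul_nonneg (by positivity)
    exact Finset.sum_nonneg fun x _ =>
      SISAux.locCpl_nonneg (nInfGraph G) a lam kap σ0 η0 x (hP0 σ0 x).le (hP1 σ0 x).le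
        (hP0 η0 x).le (hP1 η0 x).le (fun hx => hPsum x hx) q
  · intro s
    rw [sisKernel, ← mul_sum, Finset.sum_comm]
    congr 1
    exact Finset.sum_congr rfl fun x _ => SISAux.locCpl_margL (nInfGraph G) a lam kap σ0 η0 x s
  · intro e
    rw [sisKernel, ← mul_sum, Finset.sum_comm]
    congr 1
    exact Finset.sum_congr rfl fun x _ => SISAux.locCpl_margR (nInfGraph G) a lam kap σ0 η0 x e
  · have hexp : _root_.expect
        (fun q => (1/(n:ℝ)) * ∑ x : Fin n, SISAux.locCpl (nInfGraph G) a lam kap σ0 η0 x q)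
        (fun q => (hamming q.1 q.2 : ℝ))
        = (1/(n:ℝ)) * ∑ x : Fin n,
            ∑ q, SISAux.locCpl (nInfGraph G) a lam kap σ0 η0 x q * (hamming q.1 q.2 : ℝ) := by
      unfold _root_.expect
      simp only [mul_assoc, Finset.sum_mul]
      rw [← mul_sum, Finset.sum_comm]
    rw [hexp]
    by_cases hσε : σ0 = η0
    · subst hσε
      have hh : (hamming σ0 σ0 : ℝ) = 0 := by simp [hamming]
      have hz : ∀ x : Fin n,
          ∑ q, SISAux.locCpl (nInfGraph G) a lam kap σ0 σ0 x q * (hamming q.1 q.2 : ℝ) = 0 := by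
        intro x
        rw [SISAux.locCpl_expect_agree (nInfGraph G) a lam kap σ0 σ0 x rfl, min_self, hh]
        ring
      rw [Finset.sum_congr rfl fun x _ => hz x, hh]
      simp
    · set ℓ : ℝ := (hamming σ0 η0 : ℝ) with hℓ
      have hℓ1 : (1:ℝ) ≤ ℓ := by
        have hpos : 0 < hamming σ0 η0 := by
          apply Finset.card_pos.mpr
          obtain ⟨x, hx⟩ := Function.ne_iff.mp hσε
          exact ⟨x, Finset.mem_filter.mpr ⟨Finset.mem_univ x, hx⟩⟩
        rw [hℓ]
        exact_mod_cast hpos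
      have hℓn' : hamming σ0 η0 ≤ n := le_trans (Finset.card_filter_le _ _) (by simp)
      have hℓn : ℓ ≤ (n:ℝ) := by rw [hℓ]; exact_mod_cast hℓn'
      have hα : (1-kap)*a + (1-a)*kap ≤ 1 - kap := by nlinarith
      have hboundS : ∀ x : Fin n, σ0 x ≠ η0 x →
          ∑ q, SISAux.locCpl (nInfGraph G) a lam kap σ0 η0 x q * (hamming q.1 q.2 : ℝ)
            ≤ ℓ - ((1-kap)*a + (1-a)*kap) := by
        intro x hx
        rw [SISAux.locCpl_expect_disagree (nInfGraph G) a lam kap σ0 η0 x hx, ← hℓ]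
        have h1 := hP1 σ0 x
        have h2 := hP1 η0 x
        cases hb : σ0 x
        · have hb2 : η0 x = true := by revert hx; cases h2 : η0 x <;> simp [hb, h2]
          rw [hPk η0 x hb2]
          linarith
        · have hb2 : η0 x = false := by revert hx; cases h2 : η0 x <;> simp [hb, h2]
          rw [hPk σ0 x hb]
          linarith
      have hboundA : ∀ x : Fin n, σ0 x = η0 x →
          ∑ q, SISAux.locCpl (nInfGraph G) a lam kap σ0 η0 x q * (hamming q.1 q.2 : ℝ)
            ≤ ℓ + 2*kap*(1-kap) := by
        intro x hx
        rw [SISAux.locCpl_expect_agree (nInfGraph G) a lam kap σ0 η0 x hx, ← hℓ]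
        have key : flipProb (nInfGraph G) a lam kap σ0 x + flipProb (nInfGraph G) a lam kap η0 x
            - 2 * min (flipProb (nInfGraph G) a lam kap σ0 x)
                (flipProb (nInfGraph G) a lam kap η0 x) ≤ 2*kap*(1-kap) := by
          cases hb : σ0 x
          · have hb2 : η0 x = false := hx ▸ hb
            have ha1' := hPa σ0 x hb
            have ha2' := hPa η0 x hb2
            have h1 := hP1 σ0 x
            have h2 := hP1 η0 x
            rcases le_total (flipProb (nInfGraph G) a lam kap σ0 x)
                (flipProb (nInfGraph G) a lam kap η0 x) with h | h
            · rw [min_eq_left h]; nlinarith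
            · rw [min_eq_right h]; nlinarith
          · have hb2 : η0 x = true := hx ▸ hb
            rw [hPk σ0 x hb, hPk η0 x hb2, min_self]
            nlinarith
        linarith
      have hcardn : ((Finset.univ.filter fun x : Fin n => ¬ σ0 x ≠ η0 x).card : ℝ)
          = (n : ℝ) - ℓ := by
        have hc := Finset.card_filter_add_card_filter_not
          (s := (Finset.univ : Finset (Fin n))) (p := fun x => σ0 x ≠ η0 x)
        have hcard : (Finset.univ.filter fun x : Fin n => σ0 x ≠ η0 x).card = hamming σ0 η0 := rfl
        rw [Finset.card_univ, Fintype.card_fin, hcard] at hc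
        have : (Finset.univ.filter fun x : Fin n => ¬ σ0 x ≠ η0 x).card
            = n - hamming σ0 η0 := by omega
        rw [this, hℓ]
        push_cast [Nat.cast_sub hℓn']
        ring
      have hsum : ∑ x : Fin n,
          ∑ q, SISAux.locCpl (nInfGraph G) a lam kap σ0 η0 x q * (hamming q.1 q.2 : ℝ)
            ≤ ℓ * (ℓ - ((1-kap)*a + (1-a)*kap)) + ((n:ℝ) - ℓ) * (ℓ + 2*kap*(1-kap)) := by
        rw [← Finset.sum_filter_add_sum_filter_not Finset.univ (fun x => σ0 x ≠ η0 x)]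
        apply add_le_add
        · have h := Finset.sum_le_card_nsmul
            (Finset.univ.filter fun x : Fin n => σ0 x ≠ η0 x)
            (fun x => ∑ q, SISAux.locCpl (nInfGraph G) a lam kap σ0 η0 x q
              * (hamming q.1 q.2 : ℝ))
            (ℓ - ((1-kap)*a + (1-a)*kap))
            (fun x hx => hboundS x (Finset.mem_filter.mp hx).2)
          rw [nsmul_eq_mul] at h
          have hcard : ((Finset.univ.filter fun x : Fin n => σ0 x ≠ η0 x).card : ℝ) = ℓ := by
            rw [hℓ]; norm_cast
          rw [hcard] at h
          exact h
        · have h := Finset.sum_le_card_nsmul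
            (Finset.univ.filter fun x : Fin n => ¬ σ0 x ≠ η0 x)
            (fun x => ∑ q, SISAux.locCpl (nInfGraph G) a lam kap σ0 η0 x q
              * (hamming q.1 q.2 : ℝ))
            (ℓ + 2*kap*(1-kap))
            (fun x hx => hboundA x (not_not.mp (Finset.mem_filter.mp hx).2))
          rw [nsmul_eq_mul, hcardn] at h
          exact h
      calc (1/(n:ℝ)) * ∑ x : Fin n,
            ∑ q, SISAux.locCpl (nInfGraph G) a lam kap σ0 η0 x q * (hamming q.1 q.2 : ℝ)
          ≤ (1/(n:ℝ)) * (ℓ * (ℓ - ((1-kap)*a + (1-a)*kap))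
              + ((n:ℝ) - ℓ) * (ℓ + 2*kap*(1-kap))) := by
            apply mul_le_mul_of_nonneg_left hsum (by positivity)
        _ ≤ (1/(n:ℝ)) * ((n:ℝ) * (ℓ * (1 - gammaSIS n a kap / n))) := by
            refine mul_le_mul_of_nonneg_left ?_ (by positivity)
            have hne : (n:ℝ) ≠ 0 := hn0.ne'
            have hrhs : (n:ℝ) * (ℓ * (1 - gammaSIS n a kap / n))
                = ℓ * ((n:ℝ) - ((1 - kap) * a + (1 - a) * kap
                  - 2 * ((n:ℝ) - 1) * kap * (1 - kap))) := by
              rw [gammaSIS]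
              field_simp
            rw [hrhs]
            have hhint : (0:ℝ) ≤ (n:ℝ) * (ℓ - 1) * (kap * (1 - kap)) :=
              mul_nonneg (mul_nonneg hn0.le (by linarith)) (mul_nonneg hkap.le (by linarith))
            have hkey : ℓ * ((n:ℝ) - ((1 - kap) * a + (1 - a) * kap
                  - 2 * ((n:ℝ) - 1) * kap * (1 - kap)))
                - (ℓ * (ℓ - ((1-kap)*a + (1-a)*kap)) + ((n:ℝ) - ℓ) * (ℓ + 2*kap*(1-kap)))
                = 2 * ((n:ℝ) * (ℓ - 1) * (kap * (1 - kap))) := by ring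
            linarith only [hhint, hkey]
        _ = ℓ * (1 - gammaSIS n a kap / n) := by
            have hne : (n:ℝ) ≠ 0 := hn0.ne'
            field_simp
end

section
/- Consider the noisy SIS model on a finite graph G_n with |V_n| = n, parameters a, λ, κ > 0 with a + λ·Δ_max < 1, in the strong external infection regime 0 < κ < 1/(4(n-1)) and a > 1 - κ > 1/2, and let γ := (1-κ)a + (1-a)κ - 2(n-1)κ(1-κ). Then for every integer t ≥ 0, the worst-case total variation distance to stationarity satisfies d^(n)(t) := sup_{η_0 ∈ Ω_n} d_TV(μ^n_{η_0,t}, μ^n_{a,λ,κ}) ≤ n·(1 - γ/n)^t ≤ n·exp(-tγ/n). -/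
open Finset Real

noncomputable section
namespace SISAux
open Finset
variable {n : ℕ}

def hR (σ η : Config n) : ℝ := ∑ y, (if σ y = η y then 0 else 1)

lemma hR_eq (σ η : Config n) : (hamming σ η : ℝ) = hR σ η := by
  classical
  unfold hamming hR
  rw [Finset.card_filter]
  push_cast
  refine Finset.sum_congr rfl fun y _ => ?_
  by_cases h : σ y = η y <;> simp [h]

lemma hR_nonneg (σ η : Config n) : 0 ≤ hR σ η :=
  Finset.sum_nonneg fun y _ => by split_ifs <;> norm_num

lemma hR_le (σ η : Config n) : hR σ η ≤ n := by
  have : hR σ η ≤ ∑ _y : Fin n, (1:ℝ) :=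
    Finset.sum_le_sum fun y _ => by split_ifs <;> norm_num
  simpa using this

lemma hR_self (σ : Config n) : hR σ σ = 0 := by simp [hR]

lemma one_le_hR {σ η : Config n} (h : σ ≠ η) : 1 ≤ hR σ η := by
  obtain ⟨x, hx⟩ := Function.ne_iff.mp h
  have h1 := Finset.single_le_sum (f := fun y => if σ y = η y then (0:ℝ) else 1)
    (fun i _ => by show 0 ≤ (if σ i = η i then (0:ℝ) else 1); split_ifs <;> norm_num) (mem_univ x)
  simp only [if_neg hx] at h1
  exact h1

lemma hR_update (σ η : Config n) (x : Fin n) (b c : Bool) :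
    hR (Function.update σ x b) (Function.update η x c)
      = (∑ y ∈ univ.erase x, (if σ y = η y then (0:ℝ) else 1)) + (if b = c then 0 else 1) := by
  unfold hR
  rw [← Finset.add_sum_erase _ _ (mem_univ x), add_comm]
  congr 1
  · refine Finset.sum_congr rfl fun y hy => ?_
    rw [Function.update_of_ne (Finset.ne_of_mem_erase hy),
      Function.update_of_ne (Finset.ne_of_mem_erase hy)]
  · simp

lemma local_expect (ninf : Config n → Fin n → ℕ) (a lam kap : ℝ) (σ : Config n) (x : Fin n)
    (g : Config n → ℝ) :
    ∑ σ' : Config n, localKernel ninf a lam kap σ x σ' * g σ'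
      = flipProb ninf a lam kap σ x * g (flipAt σ x)
        + (1 - flipProb ninf a lam kap σ x) * g σ := by
  unfold localKernel
  simp only [add_mul, ite_mul, zero_mul, Finset.sum_add_distrib, Fintype.sum_ite_eq']

lemma local_sum_one (ninf : Config n → Fin n → ℕ) (a lam kap : ℝ) (σ : Config n) (x : Fin n) :
    ∑ σ' : Config n, localKernel ninf a lam kap σ x σ' = 1 := by
  have := local_expect ninf a lam kap σ x (fun _ => (1:ℝ))
  simpa using this

lemma local_nonneg (ninf : Config n → Fin n → ℕ) (a lam kap : ℝ) (σ : Config n) (x : Fin n)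
    (σ' : Config n) (h0 : 0 ≤ flipProb ninf a lam kap σ x)
    (h1 : flipProb ninf a lam kap σ x ≤ 1) :
    0 ≤ localKernel ninf a lam kap σ x σ' := by
  unfold localKernel
  split_ifs <;> linarith

def offSum (σ η : Config n) (x : Fin n) : ℝ :=
  ∑ y ∈ univ.erase x, (if σ y = η y then (0:ℝ) else 1)

lemma hR_off (σ η : Config n) (x : Fin n) :
    hR σ η = offSum σ η x + (if σ x = η x then 0 else 1) := by
  unfold offSum
  conv_lhs => rw [show σ = Function.update σ x (σ x) from (Function.update_eq_self x σ).symm,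
    show η = Function.update η x (η x) from (Function.update_eq_self x η).symm]
  rw [hR_update]

lemma hR_ff (σ η : Config n) (x : Fin n) :
    hR (flipAt σ x) (flipAt η x) = offSum σ η x + (if σ x = η x then 0 else 1) := by
  unfold offSum
  rw [flipAt, flipAt, hR_update]
  congr 1
  cases hσ : σ x <;> cases hη : η x <;> simp

lemma hR_fl (σ η : Config n) (x : Fin n) :
    hR (flipAt σ x) η = offSum σ η x + (if σ x = η x then 1 else 0) := by
  unfold offSum
  conv_lhs => rw [show η = Function.update η x (η x) from (Function.update_eq_self x η).symm]
  rw [flipAt, hR_update]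
  congr 1
  cases hσ : σ x <;> cases hη : η x <;> simp

lemma hR_fr (σ η : Config n) (x : Fin n) :
    hR σ (flipAt η x) = offSum σ η x + (if σ x = η x then 1 else 0) := by
  unfold offSum
  conv_lhs => rw [show σ = Function.update σ x (σ x) from (Function.update_eq_self x σ).symm]
  rw [flipAt, hR_update]
  congr 1
  cases hσ : σ x <;> cases hη : η x <;> simp

end SISAux
end

noncomputable section
namespace SISAux
open Finset
variable {n : ℕ}

lemma flipProb_bounds (G : SimpleGraph (Fin n)) [DecidableRel G.Adj]
    {a lam kap : ℝ} (ha : 0 < a) (hlam : 0 < lam) (hkap : 0 < kap) (hkap1 : kap ≤ 1)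
    (hpstar : a + lam * (G.maxDegree : ℝ) < 1) (σ : Config n) (x : Fin n) :
    0 ≤ flipProb (nInfGraph G) a lam kap σ x ∧ flipProb (nInfGraph G) a lam kap σ x ≤ 1 := by
  have hmax : ((nInfGraph G σ x : ℕ) : ℝ) ≤ (G.maxDegree : ℝ) := by
    have : nInfGraph G σ x ≤ G.maxDegree :=
      le_trans (Finset.card_le_card (Finset.filter_subset _ _)) (G.degree_le_maxDegree x)
    exact_mod_cast this
  have hd0 : (0:ℝ) ≤ ((nInfGraph G σ x : ℕ) : ℝ) := Nat.cast_nonneg _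
  unfold flipProb
  split_ifs
  · exact ⟨hkap.le, hkap1⟩
  · refine ⟨by positivity, ?_⟩
    nlinarith

lemma perx (G : SimpleGraph (Fin n)) [DecidableRel G.Adj]
    {a lam kap : ℝ} (hn : 2 ≤ n) (ha : 0 < a) (hlam : 0 < lam) (hkap : 0 < kap)
    (hpstar : a + lam * (G.maxDegree : ℝ) < 1)
    (hkap4 : kap ≤ 1/4) (hreg1 : 1 - kap < a)
    (σ η : Config n) (x : Fin n) :
    flipProb (nInfGraph G) a lam kap σ x *
        (flipProb (nInfGraph G) a lam kap η x * hR (flipAt σ x) (flipAt η x)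
          + (1 - flipProb (nInfGraph G) a lam kap η x) * hR (flipAt σ x) η)
      + (1 - flipProb (nInfGraph G) a lam kap σ x) *
        (flipProb (nInfGraph G) a lam kap η x * hR σ (flipAt η x)
          + (1 - flipProb (nInfGraph G) a lam kap η x) * hR σ η)
      ≤ hR σ η + (if σ x = η x then 2*kap*(1-kap) else -(a*(1-2*kap)+kap)) := by
  have hmaxσ : ((nInfGraph G σ x : ℕ) : ℝ) ≤ (G.maxDegree : ℝ) := by
    have : nInfGraph G σ x ≤ G.maxDegree :=
      le_trans (Finset.card_le_card (Finset.filter_subset _ _)) (G.degree_le_maxDegree x)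
    exact_mod_cast this
  have hmaxη : ((nInfGraph G η x : ℕ) : ℝ) ≤ (G.maxDegree : ℝ) := by
    have : nInfGraph G η x ≤ G.maxDegree :=
      le_trans (Finset.card_le_card (Finset.filter_subset _ _)) (G.degree_le_maxDegree x)
    exact_mod_cast this
  have hd0σ : (0:ℝ) ≤ ((nInfGraph G σ x : ℕ) : ℝ) := Nat.cast_nonneg _
  have hd0η : (0:ℝ) ≤ ((nInfGraph G η x : ℕ) : ℝ) := Nat.cast_nonneg _
  rw [hR_ff, hR_fl, hR_fr, hR_off σ η x]
  set E := offSum σ η x with hE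
  cases hσx : σ x <;> cases hηx : η x <;>
    simp only [flipProb, hσx, hηx, if_true, if_false, Bool.false_eq_true, Bool.true_eq_false,
      if_neg (Bool.false_ne_true), reduceIte]
  · -- σ x = false, η x = false : both susceptible
    nlinarith [mul_nonneg (mul_nonneg hlam.le hd0σ) (mul_nonneg hlam.le hd0η),
      mul_nonneg hlam.le hd0σ, mul_nonneg hlam.le hd0η]
  · -- σ x = false, η x = true
    nlinarith [mul_nonneg hlam.le hd0σ]
  · -- σ x = true, η x = false
    nlinarith [mul_nonneg hlam.le hd0η]
  · -- both infected
    nlinarith []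


lemma step_contract (G : SimpleGraph (Fin n)) [DecidableRel G.Adj]
    {a lam kap : ℝ} (hn : 2 ≤ n) (ha : 0 < a) (hlam : 0 < lam) (hkap : 0 < kap)
    (hpstar : a + lam * (G.maxDegree : ℝ) < 1)
    (hkap4 : kap ≤ 1/4) (hreg1 : 1 - kap < a)
    (σ η : Config n) (hne : σ ≠ η) :
    ∑ q : Config n × Config n, sisCoupling (nInfGraph G) a lam kap (σ, η) q * hR q.1 q.2
      ≤ (1 - gammaSIS n a kap / n) * hR σ η := by
  have hn0 : (0:ℝ) < n := by
    have : (2:ℝ) ≤ n := by exact_mod_cast hn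
    linarith
  have rearr : ∑ q : Config n × Config n, sisCoupling (nInfGraph G) a lam kap (σ, η) q * hR q.1 q.2
      = (1/(n:ℝ)) * ∑ x : Fin n,
          (∑ σ' : Config n, localKernel (nInfGraph G) a lam kap σ x σ' *
            (∑ η' : Config n, localKernel (nInfGraph G) a lam kap η x η' * hR σ' η')) := by
    rw [Fintype.sum_prod_type, Finset.mul_sum]
    calc ∑ σ' : Config n, ∑ η' : Config n,
          sisCoupling (nInfGraph G) a lam kap (σ, η) (σ', η') * hR σ' η'
        = ∑ σ' : Config n, ∑ η' : Config n, ∑ x : Fin n, (1/(n:ℝ)) *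
            (localKernel (nInfGraph G) a lam kap σ x σ' *
              (localKernel (nInfGraph G) a lam kap η x η' * hR σ' η')) := by
          refine Finset.sum_congr rfl fun σ' _ => Finset.sum_congr rfl fun η' _ => ?_
          simp only [sisCoupling, Finset.mul_sum, Finset.sum_mul]
          exact Finset.sum_congr rfl fun x _ => by ring
      _ = ∑ σ' : Config n, ∑ x : Fin n, ∑ η' : Config n, (1/(n:ℝ)) *
            (localKernel (nInfGraph G) a lam kap σ x σ' *
              (localKernel (nInfGraph G) a lam kap η x η' * hR σ' η')) := by
          exact Finset.sum_congr rfl fun σ' _ => Finset.sum_comm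
      _ = ∑ x : Fin n, ∑ σ' : Config n, ∑ η' : Config n, (1/(n:ℝ)) *
            (localKernel (nInfGraph G) a lam kap σ x σ' *
              (localKernel (nInfGraph G) a lam kap η x η' * hR σ' η')) := Finset.sum_comm
      _ = ∑ x : Fin n, (1/(n:ℝ)) * (∑ σ' : Config n,
            localKernel (nInfGraph G) a lam kap σ x σ' *
              (∑ η' : Config n, localKernel (nInfGraph G) a lam kap η x η' * hR σ' η')) := by
          refine Finset.sum_congr rfl fun x _ => ?_
          rw [Finset.mul_sum]
          refine Finset.sum_congr rfl fun σ' _ => ?_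
          rw [Finset.mul_sum, Finset.mul_sum]
  have Tbound : ∀ x : Fin n,
      (∑ σ' : Config n, localKernel (nInfGraph G) a lam kap σ x σ' *
        (∑ η' : Config n, localKernel (nInfGraph G) a lam kap η x η' * hR σ' η'))
      ≤ hR σ η + (if σ x = η x then 2*kap*(1-kap) else -(a*(1-2*kap)+kap)) := by
    intro x
    have e2 : ∀ τ : Config n,
        (∑ η' : Config n, localKernel (nInfGraph G) a lam kap η x η' * hR τ η')
          = flipProb (nInfGraph G) a lam kap η x * hR τ (flipAt η x)
            + (1 - flipProb (nInfGraph G) a lam kap η x) * hR τ η :=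
      fun τ => local_expect (nInfGraph G) a lam kap η x (fun η' => hR τ η')
    simp only [e2]
    rw [local_expect (nInfGraph G) a lam kap σ x
      (fun τ => flipProb (nInfGraph G) a lam kap η x * hR τ (flipAt η x)
        + (1 - flipProb (nInfGraph G) a lam kap η x) * hR τ η)]
    exact perx G hn ha hlam hkap hpstar hkap4 hreg1 σ η x
  have h1 : 1 ≤ hR σ η := one_le_hR hne
  calc ∑ q : Config n × Config n, sisCoupling (nInfGraph G) a lam kap (σ, η) q * hR q.1 q.2
      = (1/(n:ℝ)) * ∑ x : Fin n,
          (∑ σ' : Config n, localKernel (nInfGraph G) a lam kap σ x σ' *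
            (∑ η' : Config n, localKernel (nInfGraph G) a lam kap η x η' * hR σ' η')) := rearr
    _ ≤ (1/(n:ℝ)) * ∑ x : Fin n,
          (hR σ η + (if σ x = η x then 2*kap*(1-kap) else -(a*(1-2*kap)+kap))) := by
        exact mul_le_mul_of_nonneg_left (Finset.sum_le_sum fun x _ => Tbound x) (by positivity)
    _ = (1/(n:ℝ)) * ((n:ℝ) * hR σ η + ((n:ℝ)*(2*kap*(1-kap))
          - (a*(1-2*kap)+kap + 2*kap*(1-kap)) * hR σ η)) := by
        rw [Finset.sum_add_distrib, Finset.sum_const, Finset.card_univ, Fintype.card_fin,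
          nsmul_eq_mul]
        congr 1
        have e3 : ∀ x : Fin n, (if σ x = η x then 2*kap*(1-kap) else -(a*(1-2*kap)+kap))
              = 2*kap*(1-kap) - (a*(1-2*kap)+kap + 2*kap*(1-kap))
                  * (if σ x = η x then (0:ℝ) else 1) := by
            intro x; split_ifs <;> ring
        have e4 : (∑ x : Fin n, (if σ x = η x then (0:ℝ) else 1)) = hR σ η := rfl
        rw [Finset.sum_congr rfl fun x _ => e3 x, Finset.sum_sub_distrib,
          Finset.sum_const, Finset.card_univ, Fintype.card_fin, nsmul_eq_mul,
          ← Finset.mul_sum, e4]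
    _ ≤ (1 - gammaSIS n a kap / n) * hR σ η := by
        have key : (1 - gammaSIS n a kap / n) * hR σ η
            - (1/(n:ℝ)) * ((n:ℝ) * hR σ η + ((n:ℝ)*(2*kap*(1-kap))
              - (a*(1-2*kap)+kap + 2*kap*(1-kap)) * hR σ η))
            = 2*kap*(1-kap) * (hR σ η - 1) := by
          rw [gammaSIS]; field_simp; ring
        nlinarith [mul_nonneg (by nlinarith : (0:ℝ) ≤ 2*kap*(1-kap))
          (by linarith : (0:ℝ) ≤ hR σ η - 1)]


def cK (ninf : Config n → Fin n → ℕ) (a lam kap : ℝ) :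
    Config n × Config n → Config n × Config n → ℝ :=
  fun p q => if p.1 = p.2 then (if q.1 = q.2 then sisKernel ninf a lam kap p.1 q.1 else 0)
    else sisCoupling ninf a lam kap p q

lemma sisKernel_nonneg (ninf : Config n → Fin n → ℕ) (a lam kap : ℝ)
    (hflip : ∀ σ x, 0 ≤ flipProb ninf a lam kap σ x ∧ flipProb ninf a lam kap σ x ≤ 1)
    (σ σ' : Config n) : 0 ≤ sisKernel ninf a lam kap σ σ' := by
  unfold sisKernel
  refine mul_nonneg (by positivity) (Finset.sum_nonneg fun x _ => ?_)
  exact local_nonneg ninf a lam kap σ x σ' (hflip σ x).1 (hflip σ x).2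

lemma cK_nonneg (ninf : Config n → Fin n → ℕ) (a lam kap : ℝ)
    (hflip : ∀ σ x, 0 ≤ flipProb ninf a lam kap σ x ∧ flipProb ninf a lam kap σ x ≤ 1)
    (p q : Config n × Config n) : 0 ≤ cK ninf a lam kap p q := by
  unfold cK
  split_ifs
  · exact sisKernel_nonneg ninf a lam kap hflip _ _
  · norm_num
  · unfold sisCoupling
    refine mul_nonneg (by positivity) (Finset.sum_nonneg fun x _ => mul_nonneg ?_ ?_)
    · exact local_nonneg ninf a lam kap _ x _ (hflip _ x).1 (hflip _ x).2
    · exact local_nonneg ninf a lam kap _ x _ (hflip _ x).1 (hflip _ x).2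

lemma sisCoupling_marg1 (ninf : Config n → Fin n → ℕ) (a lam kap : ℝ)
    (σ η s' : Config n) :
    (∑ e', sisCoupling ninf a lam kap (σ, η) (s', e')) = sisKernel ninf a lam kap σ s' := by
  unfold sisCoupling sisKernel
  rw [← Finset.mul_sum]
  congr 1
  rw [Finset.sum_comm]
  refine Finset.sum_congr rfl fun x _ => ?_
  dsimp only
  rw [← Finset.mul_sum, local_sum_one, mul_one]

lemma sisCoupling_marg2 (ninf : Config n → Fin n → ℕ) (a lam kap : ℝ)
    (σ η e' : Config n) :
    (∑ s', sisCoupling ninf a lam kap (σ, η) (s', e')) = sisKernel ninf a lam kap η e' := by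
  unfold sisCoupling sisKernel
  rw [← Finset.mul_sum]
  congr 1
  rw [Finset.sum_comm]
  refine Finset.sum_congr rfl fun x _ => ?_
  dsimp only
  rw [← Finset.sum_mul, local_sum_one, one_mul]

lemma cK_marg1 (ninf : Config n → Fin n → ℕ) (a lam kap : ℝ)
    (p : Config n × Config n) (s' : Config n) :
    (∑ e', cK ninf a lam kap p (s', e')) = sisKernel ninf a lam kap p.1 s' := by
  obtain ⟨σ, η⟩ := p
  by_cases hp : σ = η
  · simp only [cK, hp, if_true, if_pos rfl]
    exact Fintype.sum_ite_eq s' (fun _ => sisKernel ninf a lam kap η s')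
  · simp only [cK, if_neg hp]
    exact sisCoupling_marg1 ninf a lam kap σ η s'

lemma cK_marg2 (ninf : Config n → Fin n → ℕ) (a lam kap : ℝ)
    (p : Config n × Config n) (e' : Config n) :
    (∑ s', cK ninf a lam kap p (s', e')) = sisKernel ninf a lam kap p.2 e' := by
  obtain ⟨σ, η⟩ := p
  by_cases hp : σ = η
  · simp only [cK, hp, if_true, if_pos rfl]
    exact Fintype.sum_ite_eq' e' (fun j => sisKernel ninf a lam kap η j)
  · simp only [cK, if_neg hp]
    exact sisCoupling_marg2 ninf a lam kap σ η e'

lemma cK_contract (G : SimpleGraph (Fin n)) [DecidableRel G.Adj]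
    {a lam kap : ℝ} (hn : 2 ≤ n) (ha : 0 < a) (hlam : 0 < lam) (hkap : 0 < kap)
    (hpstar : a + lam * (G.maxDegree : ℝ) < 1)
    (hkap4 : kap ≤ 1/4) (hreg1 : 1 - kap < a)
    (p : Config n × Config n) :
    ∑ q : Config n × Config n, cK (nInfGraph G) a lam kap p q * hR q.1 q.2
      ≤ (1 - gammaSIS n a kap / n) * hR p.1 p.2 := by
  obtain ⟨σ, η⟩ := p
  by_cases hp : σ = η
  · have hz : ∀ q : Config n × Config n,
        cK (nInfGraph G) a lam kap (σ, η) q * hR q.1 q.2 = 0 := by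
      intro q
      simp only [cK, hp, if_true, if_pos rfl]
      by_cases hq : q.1 = q.2
      · rw [if_pos hq, hq, hR_self, mul_zero]
      · rw [if_neg hq, zero_mul]
    rw [Finset.sum_congr rfl fun q _ => hz q, Finset.sum_const, smul_zero]
    have : hR σ η = 0 := by rw [hp, hR_self]
    simp [this]
  · simp only [cK, if_neg hp]
    exact step_contract G hn ha hlam hkap hpstar hkap4 hreg1 σ η hp

lemma dTV_le (ρ : Config n × Config n → ℝ) (μ ν : Config n → ℝ)
    (hρ : ∀ q, 0 ≤ ρ q) (hm1 : ∀ s, (∑ e, ρ (s, e)) = μ s)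
    (hm2 : ∀ e, (∑ s, ρ (s, e)) = ν e) :
    dTV μ ν ≤ ∑ q : Config n × Config n, ρ q * hR q.1 q.2 := by
  classical
  have habs : ∀ s : Config n, |μ s - ν s|
      ≤ (∑ e ∈ univ.erase s, ρ (s, e)) + (∑ e ∈ univ.erase s, ρ (e, s)) := by
    intro s
    have hXY : μ s - ν s
        = (∑ e ∈ univ.erase s, ρ (s, e)) - (∑ e ∈ univ.erase s, ρ (e, s)) := by
      rw [← hm1 s, ← hm2 s,
        ← Finset.add_sum_erase _ (fun e => ρ (s, e)) (mem_univ s),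
        ← Finset.add_sum_erase _ (fun e => ρ (e, s)) (mem_univ s)]
      ring
    have h1 : 0 ≤ ∑ e ∈ univ.erase s, ρ (s, e) := Finset.sum_nonneg fun e _ => hρ _
    have h2 : 0 ≤ ∑ e ∈ univ.erase s, ρ (e, s) := Finset.sum_nonneg fun e _ => hρ _
    rw [hXY]
    calc |(∑ e ∈ univ.erase s, ρ (s, e)) - (∑ e ∈ univ.erase s, ρ (e, s))|
        ≤ |∑ e ∈ univ.erase s, ρ (s, e)| + |∑ e ∈ univ.erase s, ρ (e, s)| := abs_sub _ _
      _ = (∑ e ∈ univ.erase s, ρ (s, e)) + (∑ e ∈ univ.erase s, ρ (e, s)) := by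
          rw [abs_of_nonneg h1, abs_of_nonneg h2]
  have sum1 : (∑ s : Config n, ∑ e ∈ univ.erase s, ρ (s, e))
      = (∑ q : Config n × Config n, ρ q) - ∑ s : Config n, ρ (s, s) := by
    rw [Fintype.sum_prod_type, ← Finset.sum_sub_distrib]
    refine Finset.sum_congr rfl fun s _ => ?_
    rw [← Finset.add_sum_erase _ (fun e => ρ (s, e)) (mem_univ s)]
    ring
  have sum2 : (∑ s : Config n, ∑ e ∈ univ.erase s, ρ (e, s))
      = (∑ q : Config n × Config n, ρ q) - ∑ s : Config n, ρ (s, s) := by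
    have e1 : (∑ s : Config n, ∑ e ∈ univ.erase s, ρ (e, s))
        = ∑ s : Config n, ((∑ e, ρ (e, s)) - ρ (s, s)) := by
      refine Finset.sum_congr rfl fun s _ => ?_
      rw [← Finset.add_sum_erase _ (fun e => ρ (e, s)) (mem_univ s)]
      ring
    rw [e1, Finset.sum_sub_distrib]
    congr 1
    rw [Fintype.sum_prod_type]
    exact Finset.sum_comm
  have final : (∑ q : Config n × Config n, ρ q) - (∑ s : Config n, ρ (s, s))
      ≤ ∑ q : Config n × Config n, ρ q * hR q.1 q.2 := by
    rw [← sum1]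
    calc (∑ s : Config n, ∑ e ∈ univ.erase s, ρ (s, e))
        ≤ ∑ s : Config n, ∑ e ∈ univ.erase s, ρ (s, e) * hR s e := by
          refine Finset.sum_le_sum fun s _ => Finset.sum_le_sum fun e he => ?_
          have hse : s ≠ e := (Finset.ne_of_mem_erase he).symm
          have hhe := one_le_hR hse
          nlinarith [hρ (s, e)]
      _ ≤ ∑ s : Config n, ∑ e : Config n, ρ (s, e) * hR s e := by
          refine Finset.sum_le_sum fun s _ => ?_
          refine Finset.sum_le_sum_of_subset_of_nonneg (Finset.erase_subset _ _)
            fun e _ _ => mul_nonneg (hρ _) (hR_nonneg _ _)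
      _ = ∑ q : Config n × Config n, ρ q * hR q.1 q.2 := by
          rw [Fintype.sum_prod_type]
  calc dTV μ ν = (1/2) * ∑ s, |μ s - ν s| := rfl
    _ ≤ (1/2) * ∑ s : Config n,
          ((∑ e ∈ univ.erase s, ρ (s, e)) + (∑ e ∈ univ.erase s, ρ (e, s))) := by
        exact mul_le_mul_of_nonneg_left (Finset.sum_le_sum fun s _ => habs s) (by norm_num)
    _ = (∑ q : Config n × Config n, ρ q) - ∑ s : Config n, ρ (s, s) := by
        rw [Finset.sum_add_distrib, sum1, sum2]
        ring
    _ ≤ _ := final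


end SISAux
end

/-- Worst-case total variation bound at time `t`. -/
theorem noisySIS_totalVariation_upper_bound
    (n : ℕ) (hn : 2 ≤ n) (G : SimpleGraph (Fin n)) [DecidableRel G.Adj]
    (a lam kap : ℝ) (ha : 0 < a) (hlam : 0 < lam) (hkap : 0 < kap)
    (hpstar : a + lam * (G.maxDegree : ℝ) < 1)
    (hkap' : kap < 1 / (4 * ((n : ℝ) - 1)))
    (hreg1 : 1 - kap < a) (hreg2 : 1 / 2 < 1 - kap)
    (pim : Config n → ℝ)
    (hpim : IsStationaryDist (sisKernel (nInfGraph G) a lam kap) pim)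
    (t : ℕ) :
    worstDist (nInfGraph G) a lam kap pim t ≤ (n : ℝ) * (1 - gammaSIS n a kap / n) ^ t ∧
      (n : ℝ) * (1 - gammaSIS n a kap / n) ^ t ≤
        (n : ℝ) * Real.exp (-(t : ℝ) * gammaSIS n a kap / n) := by
  classical
  obtain ⟨hpim0, hpim1, hpimstat⟩ := hpim
  have hn2 : (2:ℝ) ≤ (n:ℝ) := by exact_mod_cast hn
  have hn0 : (0:ℝ) < n := by linarith
  have hkap4 : kap ≤ 1/4 := by
    have h4 : (4:ℝ) ≤ 4 * ((n:ℝ) - 1) := by linarith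
    have h5 : 1 / (4 * ((n:ℝ) - 1)) ≤ 1 / 4 :=
      one_div_le_one_div_of_le (by norm_num) h4
    linarith
  have ha1 : a < 1 := by nlinarith [mul_nonneg hlam.le (Nat.cast_nonneg G.maxDegree)]
  have hγ1 : gammaSIS n a kap ≤ 1 := by
    rw [gammaSIS]
    nlinarith [mul_nonneg (by linarith : (0:ℝ) ≤ 1 - a) (by linarith : (0:ℝ) ≤ 1 - kap),
      mul_nonneg ha.le hkap.le,
      mul_nonneg (mul_nonneg (by linarith : (0:ℝ) ≤ 2*((n:ℝ)-1)) hkap.le)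
        (by linarith : (0:ℝ) ≤ 1 - kap)]
  have h1γ : 0 ≤ 1 - gammaSIS n a kap / n := by
    have : gammaSIS n a kap / n ≤ 1 := by
      rw [div_le_one hn0]; linarith
    linarith
  have hflip : ∀ σ x, 0 ≤ flipProb (nInfGraph G) a lam kap σ x
      ∧ flipProb (nInfGraph G) a lam kap σ x ≤ 1 :=
    fun σ x => SISAux.flipProb_bounds G ha hlam hkap (by linarith) hpstar σ x
  have main : ∀ η0 : Config n, dTV (sisLaw (nInfGraph G) a lam kap η0 t) pim
      ≤ (n:ℝ) * (1 - gammaSIS n a kap / n) ^ t := by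
    intro η0
    set Kc := SISAux.cK (nInfGraph G) a lam kap with hKcdef
    set ρ0 : Config n × Config n → ℝ := fun q => deltaDist η0 q.1 * pim q.2 with hρ0
    have H : ∀ s : ℕ,
        (∀ q, 0 ≤ iterDist Kc ρ0 s q)
        ∧ (∀ s', (∑ e', iterDist Kc ρ0 s (s', e')) = sisLaw (nInfGraph G) a lam kap η0 s s')
        ∧ (∀ e', (∑ s', iterDist Kc ρ0 s (s', e')) = pim e')
        ∧ ((∑ q : Config n × Config n, iterDist Kc ρ0 s q * SISAux.hR q.1 q.2)
            ≤ (n:ℝ) * (1 - gammaSIS n a kap / n) ^ s) := by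
      intro s
      induction s with
      | zero =>
        refine ⟨?_, ?_, ?_, ?_⟩
        · intro q
          exact mul_nonneg (by unfold deltaDist; split_ifs <;> norm_num) (hpim0 _)
        · intro s'
          show (∑ e' : Config n, deltaDist η0 s' * pim e') = deltaDist η0 s'
          rw [← Finset.mul_sum, hpim1, mul_one]
        · intro e'
          show (∑ s' : Config n, deltaDist η0 s' * pim e') = pim e'
          rw [← Finset.sum_mul]
          have h1 : (∑ s' : Config n, deltaDist η0 s') = 1 := by
            unfold deltaDist
            simp
          rw [h1, one_mul]
        · show (∑ q : Config n × Config n, (deltaDist η0 q.1 * pim q.2) * SISAux.hR q.1 q.2)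
              ≤ (n:ℝ) * (1 - gammaSIS n a kap / n) ^ 0
          rw [Fintype.sum_prod_type, pow_zero, mul_one]
          have e : ∀ s' : Config n, (∑ e' : Config n, (deltaDist η0 s' * pim e') * SISAux.hR s' e')
              = if s' = η0 then ∑ e' : Config n, pim e' * SISAux.hR η0 e' else 0 := by
            intro s'
            by_cases h : s' = η0
            · subst h; simp [deltaDist]
            · simp [deltaDist, h]
          rw [Finset.sum_congr rfl fun s' _ => e s',
            Fintype.sum_ite_eq' η0 (fun _ => ∑ e' : Config n, pim e' * SISAux.hR η0 e')]
          calc (∑ e' : Config n, pim e' * SISAux.hR η0 e')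
              ≤ ∑ e' : Config n, pim e' * n :=
                Finset.sum_le_sum fun e' _ =>
                  mul_le_mul_of_nonneg_left (SISAux.hR_le _ _) (hpim0 e')
            _ = (n:ℝ) := by rw [← Finset.sum_mul, hpim1, one_mul]
      | succ s ih =>
        obtain ⟨ih0, ih1, ih2, ih3⟩ := ih
        have hstep : iterDist Kc ρ0 (s+1) = stepDist Kc (iterDist Kc ρ0 s) := rfl
        refine ⟨?_, ?_, ?_, ?_⟩
        · intro q
          rw [hstep]
          exact Finset.sum_nonneg fun p _ => mul_nonneg (ih0 p)
            (SISAux.cK_nonneg _ _ _ _ hflip p q)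
        · intro s'
          rw [hstep]
          show (∑ e' : Config n, ∑ p : Config n × Config n,
              iterDist Kc ρ0 s p * Kc p (s', e')) = _
          rw [Finset.sum_comm]
          calc (∑ p : Config n × Config n, ∑ e' : Config n,
                iterDist Kc ρ0 s p * Kc p (s', e'))
              = ∑ p : Config n × Config n, iterDist Kc ρ0 s p
                  * sisKernel (nInfGraph G) a lam kap p.1 s' := by
                refine Finset.sum_congr rfl fun p _ => ?_
                rw [← Finset.mul_sum, hKcdef, SISAux.cK_marg1]
            _ = ∑ s1 : Config n, (∑ e1 : Config n, iterDist Kc ρ0 s (s1, e1))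
                  * sisKernel (nInfGraph G) a lam kap s1 s' := by
                rw [Fintype.sum_prod_type]
                exact Finset.sum_congr rfl fun s1 _ => by rw [Finset.sum_mul]
            _ = ∑ s1 : Config n, sisLaw (nInfGraph G) a lam kap η0 s s1
                  * sisKernel (nInfGraph G) a lam kap s1 s' :=
                Finset.sum_congr rfl fun s1 _ => by rw [ih1 s1]
            _ = sisLaw (nInfGraph G) a lam kap η0 (s+1) s' := rfl
        · intro e'
          rw [hstep]
          show (∑ s' : Config n, ∑ p : Config n × Config n,
              iterDist Kc ρ0 s p * Kc p (s', e')) = _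
          rw [Finset.sum_comm]
          calc (∑ p : Config n × Config n, ∑ s' : Config n,
                iterDist Kc ρ0 s p * Kc p (s', e'))
              = ∑ p : Config n × Config n, iterDist Kc ρ0 s p
                  * sisKernel (nInfGraph G) a lam kap p.2 e' := by
                refine Finset.sum_congr rfl fun p _ => ?_
                rw [← Finset.mul_sum, hKcdef, SISAux.cK_marg2]
            _ = ∑ e1 : Config n, (∑ s1 : Config n, iterDist Kc ρ0 s (s1, e1))
                  * sisKernel (nInfGraph G) a lam kap e1 e' := by
                rw [Fintype.sum_prod_type, Finset.sum_comm]
                refine Finset.sum_congr rfl fun e1 _ => ?_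
                rw [Finset.sum_mul]
            _ = ∑ e1 : Config n, pim e1 * sisKernel (nInfGraph G) a lam kap e1 e' :=
                Finset.sum_congr rfl fun e1 _ => by rw [ih2 e1]
            _ = pim e' := hpimstat e'
        · rw [hstep]
          calc (∑ q : Config n × Config n,
                stepDist Kc (iterDist Kc ρ0 s) q * SISAux.hR q.1 q.2)
              = ∑ p : Config n × Config n, iterDist Kc ρ0 s p
                  * (∑ q : Config n × Config n, Kc p q * SISAux.hR q.1 q.2) := by
                show (∑ q : Config n × Config n,
                    (∑ p : Config n × Config n, iterDist Kc ρ0 s p * Kc p q)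
                      * SISAux.hR q.1 q.2) = _
                simp only [Finset.sum_mul]
                rw [Finset.sum_comm]
                refine Finset.sum_congr rfl fun p _ => ?_
                rw [Finset.mul_sum]
                exact Finset.sum_congr rfl fun q _ => by ring
            _ ≤ ∑ p : Config n × Config n, iterDist Kc ρ0 s p
                  * ((1 - gammaSIS n a kap / n) * SISAux.hR p.1 p.2) :=
                Finset.sum_le_sum fun p _ => mul_le_mul_of_nonneg_left
                  (SISAux.cK_contract G hn ha hlam hkap hpstar hkap4 hreg1 p) (ih0 p)
            _ = (1 - gammaSIS n a kap / n)
                  * ∑ p : Config n × Config n, iterDist Kc ρ0 s p * SISAux.hR p.1 p.2 := by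
                rw [Finset.mul_sum]
                exact Finset.sum_congr rfl fun p _ => by ring
            _ ≤ (1 - gammaSIS n a kap / n) * ((n:ℝ) * (1 - gammaSIS n a kap / n) ^ s) :=
                mul_le_mul_of_nonneg_left ih3 h1γ
            _ = (n:ℝ) * (1 - gammaSIS n a kap / n) ^ (s+1) := by ring
    obtain ⟨h0, h1m, h2m, h3⟩ := H t
    exact le_trans (SISAux.dTV_le (iterDist Kc ρ0 t) _ pim h0 h1m h2m) h3
  constructor
  · unfold worstDist
    exact ciSup_le fun η0 => main η0
  · have hexp : 1 - gammaSIS n a kap / n ≤ Real.exp (-(gammaSIS n a kap / n)) := by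
      have := Real.add_one_le_exp (-(gammaSIS n a kap / n))
      linarith
    have hpow := pow_le_pow_left₀ h1γ hexp t
    have heq : Real.exp (-(gammaSIS n a kap / n)) ^ t
        = Real.exp (-(t:ℝ) * gammaSIS n a kap / n) := by
      rw [← Real.exp_nat_mul]
      congr 1
      ring
    rw [← heq]
    exact mul_le_mul_of_nonneg_left hpow hn0.le
end
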